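/- Let r₀ > 1 be odd, ω ∈ ℂ a primitive r₀-th root of unity, and s₀ the multiplicative order of 2 modulo r₀. If s₀ is even then T(2^{s₀}; ω) is real, and if s₀ is odd then T(2^{s₀}; ω) is purely imaginary (its real part is zero). -/

import Mathlib

open Finset

/-- The Thue–Morse sequence: `t n = (-1)^(binary digit sum of n)`,
so `t 0 = 1`, `t (2n) = t n`, `t (2n+1) = -t n`. -/
def thueMorse (n : ℕ) : ℤ := (-1) ^ (Nat.digits 2 n).sum

/-- Evaluation of the Thue–Morse polynomial: `T(n; z) = ∑_{m=0}^{n-1} t(m) z^m ∈ ℂ`. -/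
noncomputable def tmEval (n : ℕ) (z : ℂ) : ℂ :=
  ∑ m ∈ Finset.range n, (thueMorse m : ℂ) * z ^ m

/-!
The Thue–Morse recursion gives `T(2^s; z) = ∏_{i<s} (1 - z^{2^i})`. On the unit circle each factor
satisfies `conj (1 - w) = -w⁻¹ (1 - w)`, and the product of all the `w = z^{2^i}` is
`z^{2^s - 1}`. Since `2^{s₀} ≡ 1 (mod r₀)`, this is `1` for `z = ω`, so `conj T = (-1)^{s₀} T`.
-/

open ComplexConjugate

lemma thueMorse_two_mul (n : ℕ) : thueMorse (2 * n) = thueMorse n := by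
  rcases Nat.eq_zero_or_pos n with rfl | hn
  · rfl
  · rw [thueMorse, thueMorse, Nat.digits_def' (by norm_num) (by omega)]
    simp

lemma thueMorse_two_mul_add_one (n : ℕ) : thueMorse (2 * n + 1) = -thueMorse n := by
  rw [thueMorse, thueMorse, Nat.digits_def' (by norm_num) (by omega),
    show (2 * n + 1) % 2 = 1 by omega, show (2 * n + 1) / 2 = n by omega]
  simp [pow_add]

lemma tmEval_two_mul (n : ℕ) (z : ℂ) : tmEval (2 * n) z = (1 - z) * tmEval n (z ^ 2) := by
  induction n with
  | zero => simp [tmEval]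
  | succ n ih =>
    rw [show 2 * (n + 1) = 2 * n + 1 + 1 by ring]
    simp only [tmEval] at *
    rw [sum_range_succ, sum_range_succ, sum_range_succ, ih, thueMorse_two_mul,
      thueMorse_two_mul_add_one]
    push_cast
    ring

lemma tmEval_two_pow (s : ℕ) (z : ℂ) : tmEval (2 ^ s) z = ∏ i ∈ range s, (1 - z ^ 2 ^ i) := by
  induction s generalizing z with
  | zero => simp [tmEval, thueMorse]
  | succ s ih =>
    rw [pow_succ', tmEval_two_mul, ih, prod_range_succ', pow_zero, pow_one, mul_comm]
    simp only [← pow_mul, ← pow_succ']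

lemma prod_pow_two_pow {M : Type*} [CommMonoid M] (x : M) (s : ℕ) :
    ∏ i ∈ range s, x ^ 2 ^ i = x ^ (2 ^ s - 1) := by
  rw [prod_pow_eq_pow_sum, Nat.geomSum_eq le_rfl, Nat.div_one]

lemma Complex.conj_one_sub_of_norm_eq_one {w : ℂ} (hw : ‖w‖ = 1) :
    conj (1 - w) = -w⁻¹ * (1 - w) := by
  have hw0 : w ≠ 0 := norm_ne_zero_iff.mp (by rw [hw]; exact one_ne_zero)
  rw [map_sub, map_one, ← Complex.inv_eq_conj hw]
  field_simp
  ring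

lemma conj_tmEval_two_pow {s : ℕ} {z : ℂ} (hz : z ^ (2 ^ s - 1) = 1) :
    conj (tmEval (2 ^ s) z) = (-1) ^ s * tmEval (2 ^ s) z := by
  rcases Nat.eq_zero_or_pos s with rfl | hs
  · rw [tmEval_two_pow, prod_range_zero, map_one, pow_zero, one_mul]
  have hz1 : ‖z‖ = 1 := Complex.norm_eq_one_of_pow_eq_one hz (by
    have := Nat.one_lt_two_pow hs.ne'; omega)
  have hfactor : ∀ i ∈ range s, conj (1 - z ^ 2 ^ i) = (-1) * (z ^ 2 ^ i)⁻¹ * (1 - z ^ 2 ^ i) :=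
    fun i _ => by
      rw [neg_one_mul]
      exact Complex.conj_one_sub_of_norm_eq_one (by rw [norm_pow, hz1, one_pow])
  rw [tmEval_two_pow, map_prod, prod_congr rfl hfactor, prod_mul_distrib, prod_mul_distrib,
    prod_const, card_range, prod_inv_distrib, prod_pow_two_pow, hz, inv_one, mul_one]

lemma Nat.pow_orderOf_modEq_one (a n : ℕ) : a ^ orderOf (a : ZMod n) ≡ 1 [MOD n] := by
  rw [← ZMod.natCast_eq_natCast_iff, Nat.cast_pow, pow_orderOf_eq_one, Nat.cast_one]

theorem tmEval_real_or_imaginary_general (r₀ : ℕ) (ω : ℂ)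
    (hω : IsPrimitiveRoot ω r₀) (s₀ : ℕ) (hs₀ : s₀ = orderOf (2 : ZMod r₀)) :
    (Even s₀ → (tmEval (2 ^ s₀) ω).im = 0) ∧ (Odd s₀ → (tmEval (2 ^ s₀) ω).re = 0) := by
  have hdvd : r₀ ∣ 2 ^ s₀ - 1 := by
    rw [hs₀]
    exact (Nat.modEq_iff_dvd' Nat.one_le_two_pow).mp (Nat.pow_orderOf_modEq_one 2 r₀).symm
  have hconj := conj_tmEval_two_pow ((hω.pow_eq_one_iff_dvd _).mpr hdvd)
  refine ⟨fun hs => ?_, fun hs => ?_⟩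
  · rw [hs.neg_one_pow, one_mul] at hconj
    exact Complex.conj_eq_iff_im.mp hconj
  · rw [hs.neg_one_pow, neg_one_mul] at hconj
    have := congrArg Complex.re hconj
    rw [Complex.conj_re, Complex.neg_re] at this
    linarith

theorem tmEval_real_or_imaginary (r₀ : ℕ) (hr₀ : 1 < r₀) (hodd : Odd r₀) (ω : ℂ)
    (hω : IsPrimitiveRoot ω r₀) (s₀ : ℕ) (hs₀ : s₀ = orderOf (2 : ZMod r₀)) :
    (Even s₀ → (tmEval (2 ^ s₀) ω).im = 0) ∧ (Odd s₀ → (tmEval (2 ^ s₀) ω).re = 0) :=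
  tmEval_real_or_imaginary_general r₀ ω hω s₀ hs₀
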